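/- Let A be a residuated binar whose underlying lattice is distributive. If A satisfies the identities x·(y ∧ z) = (x·y) ∧ (x·z) and (x ∨ y)/z = (x/z) ∨ (y/z), then A satisfies the identity x/(y ∧ z) = (x/y) ∨ (x/z). -/

import Mathlib

/-!
Put `t = x/(y ∧ z)`. Since `·` preserves joins in its right argument and `/` preserves joins in
its numerator, the unit of the adjunction `_·(y ∨ z) ⊣ _/(y ∨ z)` gives
`t ≤ (t·z)/y ∨ (t·y)/z`. Meeting with `t` and distributing, it suffices that
`t ∧ (t·z)/y ≤ x/y`, which holds because `(t ∧ (t·z)/y)·y ≤ t·y ∧ t·z = t·(y ∧ z) ≤ x`;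
symmetrically for `z`.
-/

def IsResiduated {A : Type*} [LE A] (mul under over' : A → A → A) : Prop :=
  ∀ x y z : A, (mul x y ≤ z ↔ y ≤ under x z) ∧ (mul x y ≤ z ↔ x ≤ over' z y)

namespace IsResiduated

section Preorder

variable {A : Type*} [Preorder A] {mul under over' : A → A → A}

theorem gc_left (h : IsResiduated mul under over') (x : A) :
    GaloisConnection (mul x) (under x) :=
  fun y z => (h x y z).1

theorem gc_right (h : IsResiduated mul under over') (y : A) :
    GaloisConnection (fun x => mul x y) (fun z => over' z y) :=
  fun x z => (h x y z).2

theorem mul_over_le (h : IsResiduated mul under over') (y z : A) : mul (over' z y) y ≤ z :=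
  (h.gc_right y).l_u_le z

theorem over_antitone_right (h : IsResiduated mul under over') (z : A) :
    Antitone (over' z) := fun _ _ hy =>
  (h.gc_right _).le_u (((h.gc_left _).monotone_l hy).trans (h.mul_over_le _ z))

end Preorder

section Lattice

variable {A : Type*} [Lattice A] {mul under over' : A → A → A}

theorem over_sup_le_over_inf (h : IsResiduated mul under over') (x y z : A) :
    over' x y ⊔ over' x z ≤ over' x (y ⊓ z) :=
  sup_le (h.over_antitone_right x inf_le_left) (h.over_antitone_right x inf_le_right)

theorem le_over_mul_sup_over_mul (h : IsResiduated mul under over')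
    (hover : ∀ x y z : A, over' (x ⊔ y) z = over' x z ⊔ over' y z) (t y z : A) :
    t ≤ over' (mul t z) y ⊔ over' (mul t y) z :=
  calc t ≤ over' (mul t (y ⊔ z)) (y ⊔ z) := (h.gc_right _).le_u_l t
    _ = over' (mul t y) (y ⊔ z) ⊔ over' (mul t z) (y ⊔ z) := by
      rw [(h.gc_left t).l_sup, hover]
    _ ≤ over' (mul t z) y ⊔ over' (mul t y) z := by
      rw [sup_comm]
      exact sup_le_sup (h.over_antitone_right _ le_sup_left)
        (h.over_antitone_right _ le_sup_right)

theorem inf_over_mul_le_over (h : IsResiduated mul under over') {t x y z : A}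
    (htx : mul t y ⊓ mul t z ≤ x) : t ⊓ over' (mul t z) y ≤ over' x y := by
  refine (h.gc_right y).le_u (le_trans (le_inf ?_ ?_) htx)
  · exact (h.gc_right y).monotone_l inf_le_left
  · exact ((h.gc_right y).monotone_l inf_le_right).trans (h.mul_over_le y _)

end Lattice

end IsResiduated

/-- In a residuated binar with distributive lattice reduct,
identities (1) and (4) imply identity (6). -/
theorem stmt_2 {A : Type*} [Lattice A]
    (mul under over' : A → A → A)
    (hres : ∀ x y z : A, (mul x y ≤ z ↔ y ≤ under x z) ∧ (mul x y ≤ z ↔ x ≤ over' z y))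
    (hdist : ∀ x y z : A, x ⊓ (y ⊔ z) = (x ⊓ y) ⊔ (x ⊓ z))
    (h1 : ∀ x y z : A, mul x (y ⊓ z) = mul x y ⊓ mul x z)
    (h2 : ∀ x y z : A, over' (x ⊔ y) z = over' x z ⊔ over' y z) :
    ∀ x y z : A, over' x (y ⊓ z) = over' x y ⊔ over' x z := by
  have hA : IsResiduated mul under over' := hres
  intro x y z
  refine le_antisymm ?_ (hA.over_sup_le_over_inf x y z)
  set t := over' x (y ⊓ z)
  have htx : mul t y ⊓ mul t z ≤ x := h1 t y z ▸ hA.mul_over_le (y ⊓ z) x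
  calc t = t ⊓ (over' (mul t z) y ⊔ over' (mul t y) z) :=
        (inf_eq_left.mpr (hA.le_over_mul_sup_over_mul h2 t y z)).symm
    _ = t ⊓ over' (mul t z) y ⊔ t ⊓ over' (mul t y) z := hdist _ _ _
    _ ≤ over' x y ⊔ over' x z :=
        sup_le_sup (hA.inf_over_mul_le_over htx)
          (hA.inf_over_mul_le_over (inf_comm (mul t y) _ ▸ htx))
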